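/- Let Ω ⊂ ℝ^d be a nonempty compact convex set, let μ_src and μ_tgt be Borel probability measures supported in Ω, let H be a positive integer, let k be a positive integer, and set H_k := k(H+1) − 1. Suppose V = (V_0,…,V_{H_k+1}) is feasible and optimal for the dynamic dual LP on Ω with horizon H_k (its objective is ≥ that of every feasible family for horizon H_k). Then the subsampled family (V_{k·h})_{h=0}^{H+1} is feasible and optimal for the dynamic dual LP on Ω with horizon H. -/

import Mathlib

open MeasureTheory

/-- Feasibility for the dynamic dual LP on `Ω` with horizon `H'`. -/
def DynDualFeasible {d : ℕ} (Ω : Set (EuclideanSpace ℝ (Fin d))) (H' : ℕ)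
    (V : ℕ → EuclideanSpace ℝ (Fin d) → ℝ) : Prop :=
  (∀ h ≤ H' + 1, ContinuousOn (V h) Ω) ∧
  ∀ h ≤ H', ∀ x ∈ Ω, ∀ y ∈ Ω,
    V h x ≤ ((H' : ℝ) + 1) / 2 * ‖x - y‖ ^ 2 + V (h + 1) y

/-!
Subsampling every `k`-th function of a feasible family is feasible by convexity: cutting the
segment from `x` to `y` into `k` equal pieces, `k` fine steps of cost `k (H + 1) / 2` each cost
`((H + 1) / 2) ‖x - y‖²` in total. Conversely, a feasible coarse family `W` refines to a feasible
fine family with the same terminal function and a larger initial one, by filling each coarse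
step with Hopf–Lax transforms `x ↦ inf_y (c ‖x - y‖² + W (h + 1) y)`; these compose along fine
steps because quadratic costs add harmonically. Optimality of `V` on the fine grid then bounds
the objective of `W` by that of `V`, which is the objective of its subsample.
-/

theorem ContinuousOn.integrable_of_measure_compl_eq_zero {X : Type*} [TopologicalSpace X]
    [T2Space X] [MeasurableSpace X] [OpensMeasurableSpace X] {μ : Measure X} [IsFiniteMeasure μ]
    {K : Set X} {f : X → ℝ} (hf : ContinuousOn f K) (hK : IsCompact K) (hμ : μ Kᶜ = 0) :
    Integrable f μ := by
  rw [← Measure.restrict_eq_self_of_ae_mem (mem_ae_iff.mpr hμ)]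
  exact hf.integrableOn_compact hK

theorem mul_div_add_mul_sq_add_le {a b : ℝ} (ha : 0 < a) (hb : 0 < b) (s t : ℝ) :
    a * b / (a + b) * (s + t) ^ 2 ≤ a * s ^ 2 + b * t ^ 2 := by
  rw [div_mul_eq_mul_div, div_le_iff₀ (by positivity)]
  nlinarith [sq_nonneg (a * s - b * t)]

section Chain

variable {E : Type*} [NormedAddCommGroup E] [NormedSpace ℝ E]

theorem Convex.le_add_of_chain {Ω : Set E} (hΩ : Convex ℝ Ω) {C : ℝ} {k : ℕ} (hk : 0 < k)
    {U : ℕ → E → ℝ} (hU : ∀ j < k, ∀ x ∈ Ω, ∀ y ∈ Ω, U j x ≤ C * ‖x - y‖ ^ 2 + U (j + 1) y)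
    {x y : E} (hx : x ∈ Ω) (hy : y ∈ Ω) :
    U 0 x ≤ C / k * ‖x - y‖ ^ 2 + U k y := by
  have hk' : (0 : ℝ) < k := by exact_mod_cast hk
  set z : ℕ → E := fun i => AffineMap.lineMap x y ((i : ℝ) / k)
  have hz_mem : ∀ i ≤ k, z i ∈ Ω := fun i hi =>
    hΩ.lineMap_mem hx hy ⟨by positivity, div_le_one_of_le₀ (by exact_mod_cast hi) hk'.le⟩
  have hz_step : ∀ i, ‖z i - z (i + 1)‖ = ‖x - y‖ / k := fun i => by
    rw [← dist_eq_norm, dist_lineMap_lineMap, Real.dist_eq, dist_eq_norm]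
    push_cast
    rw [← sub_div, sub_add_cancel_left, abs_div, abs_neg, abs_one, abs_of_pos hk']
    ring
  have key : ∀ i ≤ k, U 0 x ≤ C * i / k ^ 2 * ‖x - y‖ ^ 2 + U i (z i) := by
    intro i hi
    induction i with
    | zero => simp [z]
    | succ i ih =>
      have hstep := hU i hi (z i) (hz_mem i (by omega)) (z (i + 1)) (hz_mem (i + 1) hi)
      rw [hz_step] at hstep
      push_cast
      calc U 0 x ≤ C * i / k ^ 2 * ‖x - y‖ ^ 2 + U i (z i) := ih (by omega)
        _ ≤ C * i / k ^ 2 * ‖x - y‖ ^ 2 + (C * (‖x - y‖ / k) ^ 2 + U (i + 1) (z (i + 1))) := by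
          gcongr
        _ = C * (i + 1) / k ^ 2 * ‖x - y‖ ^ 2 + U (i + 1) (z (i + 1)) := by ring
  have hzk : z k = y := by simp [z, div_self hk'.ne']
  have hcoef : C * k / k ^ 2 = C / k := by field_simp
  simpa only [hzk, hcoef] using key k le_rfl

end Chain

section HopfLax

variable {E : Type*} [NormedAddCommGroup E]

noncomputable def hopfLax (Ω : Set E) (c : ℝ) (f : E → ℝ) (x : E) : ℝ :=
  ⨅ y : Ω, c * ‖x - y‖ ^ 2 + f y

variable {Ω : Set E} {f : E → ℝ}

theorem hopfLax_le (hΩ : IsCompact Ω) (hf : ContinuousOn f Ω) (c : ℝ) (x : E) {y : E}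
    (hy : y ∈ Ω) : hopfLax Ω c f x ≤ c * ‖x - y‖ ^ 2 + f y := by
  have : CompactSpace Ω := isCompact_iff_compactSpace.mp hΩ
  have hg : Continuous fun z : Ω => c * ‖x - z‖ ^ 2 + f z := by
    have : Continuous fun z : Ω => f z := hf.comp_continuous continuous_subtype_val Subtype.property
    exact (continuous_const.mul ((continuous_const.sub continuous_subtype_val).norm.pow 2)).add this
  exact ciInf_le (isCompact_range hg).bddBelow ⟨y, hy⟩

theorem le_hopfLax (hΩ : Ω.Nonempty) {c a : ℝ} {x : E}
    (h : ∀ y ∈ Ω, a ≤ c * ‖x - y‖ ^ 2 + f y) : a ≤ hopfLax Ω c f x :=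
  have := hΩ.to_subtype
  le_ciInf fun y => h y y.2

theorem continuous_hopfLax (hΩ : IsCompact Ω) (hf : ContinuousOn f Ω) (c : ℝ) :
    Continuous (hopfLax Ω c f) := by
  unfold hopfLax iInf
  have : CompactSpace Ω := isCompact_iff_compactSpace.mp hΩ
  have hcont : Continuous (Function.uncurry fun (x : E) (y : Ω) => c * ‖x - y‖ ^ 2 + f y) := by
    have : Continuous fun z : Ω => f z := hf.comp_continuous continuous_subtype_val Subtype.property
    exact (continuous_const.mul ((continuous_fst.sub (continuous_subtype_val.comp
      continuous_snd)).norm.pow 2)).add (this.comp continuous_snd)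
  simpa only [Set.image_univ] using isCompact_univ.continuous_sInf hcont

theorem hopfLax_le_add_hopfLax (hΩ : IsCompact Ω) (hf : ContinuousOn f Ω) {a b : ℝ}
    (ha : 0 < a) (hb : 0 < b) (x : E) {y : E} (hy : y ∈ Ω) :
    hopfLax Ω (a * b / (a + b)) f x ≤ a * ‖x - y‖ ^ 2 + hopfLax Ω b f y := by
  rw [← sub_le_iff_le_add']
  refine le_hopfLax ⟨y, hy⟩ fun z hz => ?_
  calc hopfLax Ω (a * b / (a + b)) f x - a * ‖x - y‖ ^ 2
      ≤ a * b / (a + b) * ‖x - z‖ ^ 2 + f z - a * ‖x - y‖ ^ 2 := by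
        gcongr; exact hopfLax_le hΩ hf _ x hz
    _ ≤ a * b / (a + b) * (‖x - y‖ + ‖y - z‖) ^ 2 + f z - a * ‖x - y‖ ^ 2 := by
        gcongr; exact norm_sub_le_norm_sub_add_norm_sub x y z
    _ ≤ b * ‖y - z‖ ^ 2 + f z := by
        linarith [mul_div_add_mul_sq_add_le ha hb ‖x - y‖ ‖y - z‖]

theorem hopfLax_div_succ_le (hΩ : IsCompact Ω) (hf : ContinuousOn f Ω) {C : ℝ} (hC : 0 < C)
    {m : ℕ} (hm : 0 < m) (x : E) {y : E} (hy : y ∈ Ω) :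
    hopfLax Ω (C / (m + 1)) f x ≤ C * ‖x - y‖ ^ 2 + hopfLax Ω (C / m) f y := by
  have hm' : (0 : ℝ) < m := by exact_mod_cast hm
  have hcoef : C * (C / m) / (C + C / m) = C / (m + 1) := by field_simp
  simpa only [hcoef] using hopfLax_le_add_hopfLax hΩ hf hC (b := C / m) (by positivity) x hy

end HopfLax

section Refinement

variable {E : Type*} [NormedAddCommGroup E]

/-- Fine time `k * h + r` (`r < k`) carries the Hopf–Lax transform of `W (h + 1)` over the
`k - r` fine steps, each of cost `k (H + 1) / 2`, left before coarse time `h + 1`. -/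
noncomputable def dualRefinement (Ω : Set E) (k H : ℕ) (W : ℕ → E → ℝ) (j : ℕ) : E → ℝ :=
  if k * (H + 1) ≤ j then W (H + 1)
  else hopfLax Ω ((k * (H + 1) : ℝ) / 2 / (k - j % k : ℕ)) (W (j / k + 1))

variable {Ω : Set E} {k H : ℕ} {W : ℕ → E → ℝ}

theorem dualRefinement_mul_add (hk : 0 < k) {h r : ℕ} (hh : h ≤ H) (hr : r < k) :
    dualRefinement Ω k H W (k * h + r) =
      hopfLax Ω ((k * (H + 1) : ℝ) / 2 / (k - r : ℕ)) (W (h + 1)) := by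
  have hlt : k * h + r < k * (H + 1) := by nlinarith
  simp [dualRefinement, hlt, Nat.mul_add_div hk, Nat.mod_eq_of_lt hr,
    Nat.div_eq_of_lt hr]

theorem dualRefinement_horizon : dualRefinement Ω k H W (k * (H + 1)) = W (H + 1) := by
  simp [dualRefinement]

end Refinement

section DynDual

variable {d : ℕ} {Ω : Set (EuclideanSpace ℝ (Fin d))} {k H : ℕ}
  {V W : ℕ → EuclideanSpace ℝ (Fin d) → ℝ}

theorem cast_mul_succ_sub_one_add_one (hk : 0 < k) :
    ((k * (H + 1) - 1 : ℕ) : ℝ) + 1 = k * (H + 1) := by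
  rw [← Nat.cast_add_one, Nat.sub_add_cancel (Nat.mul_pos hk H.succ_pos)]
  push_cast
  ring

theorem DynDualFeasible.comp_mul (hV : DynDualFeasible Ω (k * (H + 1) - 1) V)
    (hΩ : Convex ℝ Ω) (hk : 0 < k) : DynDualFeasible Ω H (fun h => V (k * h)) := by
  have hN : k * (H + 1) - 1 + 1 = k * (H + 1) := Nat.sub_add_cancel (Nat.mul_pos hk H.succ_pos)
  refine ⟨fun h hh => hV.1 _ (by rw [hN]; exact Nat.mul_le_mul_left k hh), ?_⟩
  intro h hh x hx y hy
  have hstep : ∀ j < k, ∀ x ∈ Ω, ∀ y ∈ Ω, V (k * h + j) x ≤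
      (k * (H + 1) : ℝ) / 2 * ‖x - y‖ ^ 2 + V (k * h + j + 1) y := by
    intro j hj x hx y hy
    rw [← cast_mul_succ_sub_one_add_one hk]
    exact hV.2 _ (by nlinarith) x hx y hy
  have hcoef : (k * (H + 1) : ℝ) / 2 / k = (H + 1) / 2 := by field_simp
  simpa [hcoef, Nat.mul_succ] using hΩ.le_add_of_chain hk hstep hx hy

theorem DynDualFeasible.le_dualRefinement (hW : DynDualFeasible Ω H W) (hk : 0 < k) {h : ℕ}
    (hh : h ≤ H + 1) {x : EuclideanSpace ℝ (Fin d)} (hx : x ∈ Ω) :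
    W h x ≤ dualRefinement Ω k H W (k * h) x := by
  rcases hh.eq_or_lt with rfl | hh
  · rw [dualRefinement_horizon]
  rw [← add_zero (k * h), dualRefinement_mul_add hk (by omega) hk, Nat.sub_zero]
  refine le_hopfLax ⟨x, hx⟩ fun y hy => ?_
  have hcoef : (k * (H + 1) : ℝ) / 2 / k = (H + 1) / 2 := by field_simp
  simpa only [hcoef] using hW.2 h (by omega) x hx y hy

theorem DynDualFeasible.continuousOn_dualRefinement (hW : DynDualFeasible Ω H W)
    (hΩ : IsCompact Ω) (j : ℕ) : ContinuousOn (dualRefinement Ω k H W j) Ω := by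
  unfold dualRefinement
  split_ifs with hj
  · exact hW.1 _ le_rfl
  · have : j / k ≤ H := Nat.lt_succ_iff.mp (Nat.div_lt_of_lt_mul (by rwa [not_le] at hj))
    exact (continuous_hopfLax hΩ (hW.1 _ (by omega)) _).continuousOn

theorem DynDualFeasible.dualRefinement (hW : DynDualFeasible Ω H W) (hΩ : IsCompact Ω)
    (hk : 0 < k) : DynDualFeasible Ω (k * (H + 1) - 1) (dualRefinement Ω k H W) := by
  refine ⟨fun j _ => hW.continuousOn_dualRefinement hΩ j, ?_⟩
  intro j hj x hx y hy
  rw [cast_mul_succ_sub_one_add_one hk]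
  set C : ℝ := k * (H + 1) / 2
  have hC : 0 < C := by positivity
  obtain ⟨h, r, hr, rfl⟩ : ∃ h r, r < k ∧ k * h + r = j :=
    ⟨j / k, j % k, Nat.mod_lt j hk, Nat.div_add_mod j k⟩
  have hh : h ≤ H := by
    by_contra! hH
    nlinarith [Nat.sub_add_cancel (Nat.mul_pos hk H.succ_pos)]
  rw [dualRefinement_mul_add hk hh hr]
  rcases (Nat.succ_le_of_lt hr).eq_or_lt with hr1 | hr1
  · have hend : k * h + r + 1 = k * (h + 1) := by rw [Nat.mul_succ]; omega
    rw [hend, show k - r = 1 by omega, Nat.cast_one, div_one]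
    calc hopfLax Ω C (W (h + 1)) x ≤ C * ‖x - y‖ ^ 2 + W (h + 1) y :=
          hopfLax_le hΩ (hW.1 _ (by omega)) C x hy
      _ ≤ C * ‖x - y‖ ^ 2 + _root_.dualRefinement Ω k H W (k * (h + 1)) y := by
          gcongr; exact hW.le_dualRefinement hk (by omega) hy
  · rw [add_assoc, dualRefinement_mul_add hk hh hr1, show k - r = k - (r + 1) + 1 by omega]
    push_cast
    exact hopfLax_div_succ_le hΩ (hW.1 _ (by omega)) hC (by omega) x hy

end DynDual

theorem stmt14_general {d : ℕ} (Ω : Set (EuclideanSpace ℝ (Fin d)))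
    (hcomp : IsCompact Ω) (hconv : Convex ℝ Ω)
    (μsrc μtgt : Measure (EuclideanSpace ℝ (Fin d)))
    [IsProbabilityMeasure μsrc]
    (hsrc : μsrc Ωᶜ = 0)
    (H k : ℕ) (hk : 0 < k)
    (V : ℕ → EuclideanSpace ℝ (Fin d) → ℝ)
    (hVfeas : DynDualFeasible Ω (k * (H + 1) - 1) V)
    (hVopt : ∀ W : ℕ → EuclideanSpace ℝ (Fin d) → ℝ,
      DynDualFeasible Ω (k * (H + 1) - 1) W →
      ∫ x, W 0 x ∂μsrc - ∫ x, W (k * (H + 1) - 1 + 1) x ∂μtgt ≤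
        ∫ x, V 0 x ∂μsrc - ∫ x, V (k * (H + 1) - 1 + 1) x ∂μtgt) :
    DynDualFeasible Ω H (fun h => V (k * h)) ∧
    ∀ W : ℕ → EuclideanSpace ℝ (Fin d) → ℝ, DynDualFeasible Ω H W →
      ∫ x, W 0 x ∂μsrc - ∫ x, W (H + 1) x ∂μtgt ≤
        ∫ x, V (k * 0) x ∂μsrc - ∫ x, V (k * (H + 1)) x ∂μtgt := by
  refine ⟨hVfeas.comp_mul hconv hk, fun W hW => ?_⟩
  have hopt := hVopt _ (hW.dualRefinement hcomp hk)
  rw [Nat.sub_add_cancel (Nat.mul_pos hk H.succ_pos), dualRefinement_horizon] at hopt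
  have hstart : ∫ x, W 0 x ∂μsrc ≤ ∫ x, dualRefinement Ω k H W 0 x ∂μsrc := by
    refine integral_mono_ae ((hW.1 0 (by omega)).integrable_of_measure_compl_eq_zero hcomp hsrc)
      ((hW.continuousOn_dualRefinement hcomp 0).integrable_of_measure_compl_eq_zero hcomp hsrc) ?_
    filter_upwards [mem_ae_iff.mpr hsrc] with x hx
    simpa using hW.le_dualRefinement hk (Nat.zero_le _) hx
  rw [Nat.mul_zero]
  linarith

/-- time-scale invariance of optimal dual solutions. If `V` is feasible and
optimal for the dynamic dual LP with horizon `H_k = k(H+1) − 1`, then the subsampled family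
`h ↦ V_{k·h}` is feasible and optimal for the dynamic dual LP with horizon `H`. -/
theorem stmt14 {d : ℕ} (Ω : Set (EuclideanSpace ℝ (Fin d)))
    (hne : Ω.Nonempty) (hcomp : IsCompact Ω) (hconv : Convex ℝ Ω)
    (μsrc μtgt : Measure (EuclideanSpace ℝ (Fin d)))
    [IsProbabilityMeasure μsrc] [IsProbabilityMeasure μtgt]
    (hsrc : μsrc Ωᶜ = 0) (htgt : μtgt Ωᶜ = 0)
    (H k : ℕ) (hH : 0 < H) (hk : 0 < k)
    (V : ℕ → EuclideanSpace ℝ (Fin d) → ℝ)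
    (hVfeas : DynDualFeasible Ω (k * (H + 1) - 1) V)
    (hVopt : ∀ W : ℕ → EuclideanSpace ℝ (Fin d) → ℝ,
      DynDualFeasible Ω (k * (H + 1) - 1) W →
      ∫ x, W 0 x ∂μsrc - ∫ x, W (k * (H + 1) - 1 + 1) x ∂μtgt ≤
        ∫ x, V 0 x ∂μsrc - ∫ x, V (k * (H + 1) - 1 + 1) x ∂μtgt) :
    DynDualFeasible Ω H (fun h => V (k * h)) ∧
    ∀ W : ℕ → EuclideanSpace ℝ (Fin d) → ℝ, DynDualFeasible Ω H W →
      ∫ x, W 0 x ∂μsrc - ∫ x, W (H + 1) x ∂μtgt ≤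
        ∫ x, V (k * 0) x ∂μsrc - ∫ x, V (k * (H + 1)) x ∂μtgt :=
  stmt14_general Ω hcomp hconv μsrc μtgt hsrc H k hk V hVfeas hVopt
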